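/- arXiv:math/0208240 — 4 statements merged into one kernel-verified Lean document; each statement's English description precedes it below -/
import Mathlib

section
/- Let M be a real n×n matrix with spectral radius strictly less than 1, and let d ≥ 2. Then the linear operator T on the space of homogeneous polynomials of degree d in n variables defined by (Tπ)(x) = π(x) - π(Mx) is invertible; in particular, for any homogeneous polynomial q of degree d there exists a unique homogeneous polynomial π of degree d with π(x) - π(Mx) = q(x) for all x. -/
/-! If `π(Mx) = π(x)` for all `x`, then `π(x) = π(Mᵏx) → π(0) = 0`: Gelfand's formula turns the
bound on the spectrum into `Mᵏ → 0`, and a form of positive degree vanishes at the origin. Hence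
`π ↦ π - π ∘ M` is injective on the finite-dimensional space of degree-`d` forms, so bijective. -/

open Filter Topology MvPolynomial
open scoped ENNReal NNReal Matrix

theorem tendsto_pow_nhds_zero_of_spectralRadius_lt_one {A : Type*} [NormedRing A]
    [NormedAlgebra ℂ A] [CompleteSpace A] {a : A} (ha : spectralRadius ℂ a < 1) :
    Tendsto (fun k : ℕ => a ^ k) atTop (𝓝 0) := by
  obtain ⟨r, hra, hr1⟩ := ENNReal.lt_iff_exists_nnreal_btwn.mp ha
  have hbound : ∀ᶠ k : ℕ in atTop, ‖a ^ k‖ ≤ (r : ℝ) ^ k := by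
    filter_upwards
      [(spectrum.pow_nnnorm_pow_one_div_tendsto_nhds_spectralRadius a).eventually_lt_const hra,
      eventually_gt_atTop 0] with k hk hk0
    rw [one_div, ENNReal.rpow_inv_lt_iff (by positivity), ENNReal.rpow_natCast] at hk
    exact_mod_cast hk.le
  exact squeeze_zero_norm' hbound
    (tendsto_pow_atTop_nhds_zero_of_lt_one r.2 (by exact_mod_cast hr1))

section

attribute [local instance] Matrix.linftyOpNormedRing Matrix.linftyOpNormedAlgebra

theorem Matrix.tendsto_pow_nhds_zero_of_forall_spectrum_norm_lt_one {ι : Type*} [Fintype ι]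
    [DecidableEq ι] {M : Matrix ι ι ℝ}
    (hM : ∀ μ ∈ spectrum ℂ (M.map Complex.ofReal), ‖μ‖ < 1) :
    Tendsto (fun k : ℕ => M ^ k) atTop (𝓝 0) := by
  cases isEmpty_or_nonempty ι
  · simpa only [Subsingleton.elim _ (0 : Matrix ι ι ℝ)] using tendsto_const_nhds
  have hrad : spectralRadius ℂ (M.map Complex.ofReal) < 1 := by
    exact_mod_cast spectrum.spectralRadius_lt_of_forall_lt _ (r := 1)
      fun μ hμ => by exact_mod_cast hM μ hμ
  have hre : Continuous fun B : Matrix ι ι ℂ => B.map Complex.re :=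
    continuous_id.matrix_map Complex.continuous_re
  have hpow (k : ℕ) : (M.map Complex.ofReal ^ k).map Complex.re = M ^ k := by
    rw [show M.map Complex.ofReal = Complex.ofRealHom.mapMatrix M from rfl, ← map_pow,
      RingHom.mapMatrix_apply, Matrix.map_map]
    ext; simp
  simpa [Function.comp_def, hpow] using
    (hre.tendsto 0).comp (tendsto_pow_nhds_zero_of_spectralRadius_lt_one hrad)

end

namespace MvPolynomial

variable {σ R : Type*} [Fintype σ] [CommSemiring R]

noncomputable def linearForms (M : Matrix σ σ R) (i : σ) : MvPolynomial σ R :=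
  ∑ j, C (M i j) * X j

theorem isHomogeneous_linearForms (M : Matrix σ σ R) (i : σ) :
    (linearForms M i).IsHomogeneous 1 :=
  IsHomogeneous.sum _ _ _ fun j _ => by
    simpa using (isHomogeneous_C σ (M i j)).mul (isHomogeneous_X R j)

theorem IsHomogeneous.aeval_linearForms {p : MvPolynomial σ R} {d : ℕ} (hp : p.IsHomogeneous d)
    (M : Matrix σ σ R) : (MvPolynomial.aeval (linearForms M) p).IsHomogeneous d := by
  simpa using hp.aeval _ (isHomogeneous_linearForms M)

theorem eval_aeval_linearForms (M : Matrix σ σ R) (x : σ → R) (p : MvPolynomial σ R) :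
    eval x (aeval (linearForms M) p) = eval (M *ᵥ x) p := by
  have hx : eval x ∘ linearForms M = M *ᵥ x := by
    ext i
    simp [linearForms, Matrix.mulVec, dotProduct]
  rw [← hx, eval_assoc]
  rfl

theorem IsHomogeneous.eq_zero_of_eval_mulVec_eq [DecidableEq σ] {K : Type*} [Field K]
    [Infinite K] [TopologicalSpace K] [IsTopologicalRing K] [T2Space K] {p : MvPolynomial σ K}
    {d : ℕ} (hp : p.IsHomogeneous d) (hd : d ≠ 0) {M : Matrix σ σ K}
    (hM : Tendsto (fun k : ℕ => M ^ k) atTop (𝓝 0))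
    (hinv : ∀ x, eval (M *ᵥ x) p = eval x p) : p = 0 := by
  refine MvPolynomial.funext fun x => ?_
  have hiter (k : ℕ) : eval ((M ^ k) *ᵥ x) p = eval x p := by
    induction k with
    | zero => simp
    | succ k ih => rw [pow_succ', ← Matrix.mulVec_mulVec, hinv, ih]
  have hlim : Tendsto (fun k : ℕ => eval ((M ^ k) *ᵥ x) p) atTop (𝓝 (eval 0 p)) := by
    have hcont : Continuous fun A : Matrix σ σ K => eval (A *ᵥ x) p :=
      (continuous_eval p).comp (continuous_id.matrix_mulVec continuous_const)
    simpa [Function.comp_def] using (hcont.tendsto 0).comp hM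
  have hconst : eval 0 p = 0 := by
    rw [eval_zero, constantCoeff_eq]
    exact hp.coeff_eq_zero (by simpa using hd.symm)
  simp only [hiter] at hlim
  rw [tendsto_const_nhds_iff.mp hlim, hconst, map_zero]

end MvPolynomial

theorem Submodule.existsUnique_mem_apply_eq {K V : Type*} [Field K] [AddCommGroup V]
    [Module K V] {H : Submodule K V} [FiniteDimensional K H] {L : V →ₗ[K] V}
    (hmaps : ∀ p ∈ H, L p ∈ H) (hker : ∀ p ∈ H, L p = 0 → p = 0) {q : V} (hq : q ∈ H) :
    ∃! p, p ∈ H ∧ L p = q := by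
  have hinj : Function.Injective (L.restrict hmaps) :=
    (injective_iff_map_eq_zero _).mpr fun p hp =>
      Subtype.ext (hker p p.2 (congrArg Subtype.val hp))
  obtain ⟨p, hp⟩ := LinearMap.surjective_of_injective hinj ⟨q, hq⟩
  have hpq : L p = q := congrArg Subtype.val hp
  refine ⟨p, ⟨p.2, hpq⟩, fun y ⟨hy, hyq⟩ => sub_eq_zero.mp ?_⟩
  exact hker (y - p) (H.sub_mem hy p.2) (by rw [map_sub, hyq, hpq, sub_self])

/-- If all (complex) eigenvalues of the real matrix `M` have modulus `< 1` and `d ≥ 2`,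
then for any homogeneous polynomial `q` of degree `d` there is a unique homogeneous
polynomial `π` of degree `d` with `π(x) - π(Mx) = q(x)`. -/
theorem homogeneous_term_solvable
    (n d : ℕ) (hd : 2 ≤ d) (M : Matrix (Fin n) (Fin n) ℝ)
    (hspec : ∀ μ ∈ spectrum ℂ (M.map (Complex.ofReal)), ‖μ‖ < 1) :
    ∀ q ∈ MvPolynomial.homogeneousSubmodule (Fin n) ℝ d,
      ∃! p : MvPolynomial (Fin n) ℝ,
        p ∈ MvPolynomial.homogeneousSubmodule (Fin n) ℝ d ∧
        p - MvPolynomial.aeval (fun i => ∑ j, MvPolynomial.C (M i j) * MvPolynomial.X j) p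
          = q := by
  intro q hq
  have : FiniteDimensional ℝ (homogeneousSubmodule (Fin n) ℝ d) :=
    Module.Finite.iff_fg.mpr (homogeneousSubmodule_fg _ _ d)
  have hM := Matrix.tendsto_pow_nhds_zero_of_forall_spectrum_norm_lt_one hspec
  refine Submodule.existsUnique_mem_apply_eq
    (L := LinearMap.id - (aeval (linearForms M)).toLinearMap)
    (fun p hp => sub_mem hp (IsHomogeneous.aeval_linearForms hp M)) (fun p hp hfix => ?_) hq
  refine IsHomogeneous.eq_zero_of_eval_mulVec_eq hp (by omega) hM fun x => ?_
  have hfix' : aeval (linearForms M) p = p := (sub_eq_zero.mp hfix).symm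
  rw [← eval_aeval_linearForms, hfix']
end

section
/- Let A_s and A_u be real square matrices such that every eigenvalue μ of A_s satisfies |μ| < 1 and every eigenvalue ξ of A_u satisfies |ξ| > 1. Then for any d ≥ 2, the linear operator φ ↦ A_u·φ(z) - φ(A_s z), acting on vector-valued homogeneous polynomials of degree d, is invertible. -/
/-!
The operator `φ ↦ A_u φ - φ ∘ A_s` is linear and maps the finite-dimensional space of
vector-valued homogeneous polynomials of degree `d` to itself, so it suffices that it is
injective, and it is so even on all polynomial maps. If `A_u φ(z) = φ(A_s z)` then
`φ(z) = A_u⁻ᵏ φ(A_sᵏ z)` for every `k`. Both spectra of `A_s` and `A_u⁻¹` lie in the open unit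
disc, so by Gelfand's formula `A_sᵏ → 0` and `A_u⁻ᵏ → 0`; since `φ(A_sᵏ z) → φ(0)` stays
bounded, `φ(z) = 0`.
-/

open Filter Topology MvPolynomial Matrix

theorem tendsto_pow_atTop_nhds_zero_of_forall_spectrum_norm_lt_one {A : Type*} [NormedRing A]
    [NormedAlgebra ℂ A] [CompleteSpace A] {a : A} (h : ∀ z ∈ spectrum ℂ a, ‖z‖ < 1) :
    Tendsto (a ^ ·) atTop (𝓝 0) := by
  have hρ : spectralRadius ℂ a < 1 := by
    rcases (spectrum ℂ a).eq_empty_or_nonempty with he | hne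
    · simp [spectralRadius, he]
    · exact_mod_cast spectrum.spectralRadius_lt_of_forall_lt_of_nonempty hne
        (r := 1) fun z hz => by exact_mod_cast h z hz
  obtain ⟨r, hρr, hr1⟩ := ENNReal.lt_iff_exists_nnreal_btwn.mp hρ
  have hpow : ∀ᶠ k : ℕ in atTop, ‖a ^ k‖ ≤ (r : ℝ) ^ k := by
    have hgelfand := spectrum.pow_nnnorm_pow_one_div_tendsto_nhds_spectralRadius a
    filter_upwards [hgelfand.eventually_lt_const hρr, eventually_gt_atTop 0] with k hk hk0
    rw [one_div, ENNReal.rpow_inv_lt_iff (by positivity), ENNReal.rpow_natCast] at hk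
    exact_mod_cast hk.le
  exact squeeze_zero_norm' hpow
    (tendsto_pow_atTop_nhds_zero_of_lt_one r.2 (by exact_mod_cast hr1))

section

variable {R ι σ : Type*} [Semiring R] [TopologicalSpace R] [IsTopologicalSemiring R]
  [Fintype σ]

theorem Filter.Tendsto.matrix_mulVec {α : Type*} {l : Filter α} {M : α → Matrix ι σ R}
    {v : α → σ → R} {M₀ : Matrix ι σ R} {v₀ : σ → R} (hM : Tendsto M l (𝓝 M₀))
    (hv : Tendsto v l (𝓝 v₀)) : Tendsto (fun a => M a *ᵥ v a) l (𝓝 (M₀ *ᵥ v₀)) :=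
  ((continuous_fst.matrix_mulVec continuous_snd).tendsto _).comp (hM.prodMk_nhds hv)

theorem eq_zero_of_eq_mulVec_comp_mulVec [T2Space R] [Fintype ι] [DecidableEq ι]
    [DecidableEq σ] {A : Matrix σ σ R} {B : Matrix ι ι R}
    (hA : Tendsto (A ^ ·) atTop (𝓝 0)) (hB : Tendsto (B ^ ·) atTop (𝓝 0))
    {P : (σ → R) → ι → R} (hP : Continuous P) (h : ∀ x, P x = B *ᵥ P (A *ᵥ x)) : P = 0 := by
  have hiter (k : ℕ) (x : σ → R) : P x = B ^ k *ᵥ P (A ^ k *ᵥ x) := by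
    induction k generalizing x with
    | zero => simp
    | succ k ih => rw [ih, h, mulVec_mulVec, ← pow_succ, mulVec_mulVec, ← pow_succ']
  funext x
  have hlim :
      Tendsto (fun k : ℕ => B ^ k *ᵥ P (A ^ k *ᵥ x)) atTop (𝓝 (0 *ᵥ P (0 *ᵥ x))) :=
    hB.matrix_mulVec ((hP.tendsto _).comp (hA.matrix_mulVec tendsto_const_nhds))
  simp only [← hiter, zero_mulVec] at hlim
  exact tendsto_nhds_unique tendsto_const_nhds hlim

end

namespace Matrix

variable {ι : Type*} [Fintype ι] [DecidableEq ι]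

theorem map_nonsing_inv {K L : Type*} [Field K] [Field L] (f : K →+* L)
    (A : Matrix ι ι K) : A⁻¹.map f = (A.map f)⁻¹ := by
  rw [inv_def, inv_def, map_smul' _ _ _ (map_mul f), ← RingHom.mapMatrix_apply,
    RingHom.map_adjugate, RingHom.mapMatrix_apply, Ring.inverse_eq_inv', Ring.inverse_eq_inv',
    map_inv₀, RingHom.map_det, RingHom.mapMatrix_apply]

section

/- The `L^∞` operator norm induces the product topology on matrices, so Gelfand's formula in
this Banach algebra gives entrywise convergence. -/
attribute [local instance] Matrix.linftyOpNormedRing Matrix.linftyOpNormedAlgebra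

theorem tendsto_pow_atTop_nhds_zero_of_forall_spectrum_norm_lt_one {M : Matrix ι ι ℝ}
    (h : ∀ μ ∈ spectrum ℂ (M.map Complex.ofReal), ‖μ‖ < 1) :
    Tendsto (M ^ ·) atTop (𝓝 0) := by
  have hmap (k : ℕ) : (M ^ k).map Complex.ofReal = M.map Complex.ofReal ^ k :=
    map_pow Complex.ofRealHom.mapMatrix M k
  have hC : Tendsto (fun k : ℕ => (M ^ k).map Complex.ofReal) atTop (𝓝 0) := by
    simp only [hmap]
    exact _root_.tendsto_pow_atTop_nhds_zero_of_forall_spectrum_norm_lt_one h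
  simpa [Function.comp_def, Matrix.map_map] using
    ((continuous_id.matrix_map Complex.continuous_re).tendsto 0).comp hC

end

theorem isUnit_map_ofReal_of_forall_spectrum_one_lt_norm {M : Matrix ι ι ℝ}
    (h : ∀ ξ ∈ spectrum ℂ (M.map Complex.ofReal), 1 < ‖ξ‖) : IsUnit (M.map Complex.ofReal) :=
  spectrum.isUnit_of_zero_notMem ℂ fun h0 => absurd (h 0 h0) (by simp)

theorem isUnit_det_of_forall_spectrum_one_lt_norm {M : Matrix ι ι ℝ}
    (h : ∀ ξ ∈ spectrum ℂ (M.map Complex.ofReal), 1 < ‖ξ‖) : IsUnit M.det := by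
  have hdet : (M.map Complex.ofReal).det = M.det :=
    (RingHom.map_det Complex.ofRealHom M).symm
  have := (isUnit_iff_isUnit_det _).mp (isUnit_map_ofReal_of_forall_spectrum_one_lt_norm h)
  rw [hdet, isUnit_iff_ne_zero, Complex.ofReal_ne_zero] at this
  exact this.isUnit

theorem forall_spectrum_map_inv_norm_lt_one {M : Matrix ι ι ℝ}
    (h : ∀ ξ ∈ spectrum ℂ (M.map Complex.ofReal), 1 < ‖ξ‖) :
    ∀ μ ∈ spectrum ℂ (M⁻¹.map Complex.ofReal), ‖μ‖ < 1 := by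
  obtain ⟨u, hu⟩ := isUnit_map_ofReal_of_forall_spectrum_one_lt_norm h
  intro μ hμ
  rw [show M⁻¹.map Complex.ofReal = (M.map Complex.ofReal)⁻¹ from
    map_nonsing_inv Complex.ofRealHom M, ← hu,
    ← coe_units_inv, ← spectrum.map_inv, Set.mem_inv, hu] at hμ
  have := h _ hμ
  rw [norm_inv, one_lt_inv_iff₀] at this
  exact this.2

end Matrix

namespace MvPolynomial

variable {ι σ : Type*} [Fintype ι] [Fintype σ]

section CommRing

variable {R : Type*} [CommRing R]

noncomputable def homologicalOperator (Au : Matrix ι ι R) (As : Matrix σ σ R) :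
    (ι → MvPolynomial σ R) →ₗ[R] (ι → MvPolynomial σ R) :=
  (Au.map C).mulVecLin.restrictScalars R - (aeval (As.map C *ᵥ X)).toLinearMap.compLeft ι

theorem homologicalOperator_apply (Au : Matrix ι ι R) (As : Matrix σ σ R)
    (φ : ι → MvPolynomial σ R) (i : ι) :
    homologicalOperator Au As φ i =
      (∑ j, C (Au i j) * φ j) - aeval (fun k => ∑ l, C (As k l) * X l) (φ i) := rfl

theorem eval_homologicalOperator (Au : Matrix ι ι R) (As : Matrix σ σ R)
    (φ : ι → MvPolynomial σ R) (x : σ → R) (i : ι) :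
    eval x (homologicalOperator Au As φ i) =
      (Au *ᵥ fun j => eval x (φ j)) i - eval (As *ᵥ x) (φ i) := by
  have hsubst : eval x (aeval (As.map C *ᵥ X) (φ i)) = eval (As *ᵥ x) (φ i) := by
    rw [← coe_aeval_eq_eval, ← coe_aeval_eq_eval, RingHom.coe_coe, RingHom.coe_coe, ← bind₁,
      aeval_bind₁]
    congr 1
    ext k
    simp [mulVec, dotProduct]
  rw [← hsubst, homologicalOperator, LinearMap.sub_apply, Pi.sub_apply, map_sub]
  congr 1
  simp [mulVec, dotProduct]

theorem homologicalOperator_mem_homogeneousSubmodule (Au : Matrix ι ι R)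
    (As : Matrix σ σ R) {d : ℕ} {φ : ι → MvPolynomial σ R}
    (hφ : ∀ i, φ i ∈ homogeneousSubmodule σ R d) (i : ι) :
    homologicalOperator Au As φ i ∈ homogeneousSubmodule σ R d := by
  have hX (k : σ) : (As.map C *ᵥ X : σ → MvPolynomial σ R) k ∈ homogeneousSubmodule σ R 1 :=
    Submodule.sum_mem _ fun l _ => (isHomogeneous_X R l).C_mul _
  refine Submodule.sub_mem _ (Submodule.sum_mem _ fun j _ => (hφ j).C_mul _) ?_
  simpa using (hφ i).aeval _ hX

end CommRing

theorem homologicalOperator_injective [DecidableEq ι] [DecidableEq σ]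
    {Au : Matrix ι ι ℝ} {As : Matrix σ σ ℝ}
    (hs : ∀ μ ∈ spectrum ℂ (As.map Complex.ofReal), ‖μ‖ < 1)
    (hu : ∀ ξ ∈ spectrum ℂ (Au.map Complex.ofReal), 1 < ‖ξ‖) :
    Function.Injective (homologicalOperator Au As) := by
  rw [← LinearMap.ker_eq_bot, LinearMap.ker_eq_bot']
  intro φ hφ
  have hconj (x : σ → ℝ) :
      (Au *ᵥ fun j => eval x (φ j)) = fun i => eval (As *ᵥ x) (φ i) := by
    ext i
    rw [← sub_eq_zero, ← eval_homologicalOperator, hφ, Pi.zero_apply, map_zero]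
  have hP : (fun x j => eval x (φ j)) = 0 := eq_zero_of_eq_mulVec_comp_mulVec
    (Matrix.tendsto_pow_atTop_nhds_zero_of_forall_spectrum_norm_lt_one hs)
    (Matrix.tendsto_pow_atTop_nhds_zero_of_forall_spectrum_norm_lt_one
      (forall_spectrum_map_inv_norm_lt_one hu))
    (continuous_pi fun j => continuous_eval (φ j)) fun x => by
      rw [← hconj, mulVec_mulVec,
        nonsing_inv_mul _ (isUnit_det_of_forall_spectrum_one_lt_norm hu), one_mulVec]
  funext j
  exact MvPolynomial.funext fun x => congrFun (congrFun hP x) j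

theorem exists_homologicalOperator_eq {K : Type*} [Field K] (Au : Matrix ι ι K)
    (As : Matrix σ σ K) (hinj : Function.Injective (homologicalOperator Au As)) {d : ℕ}
    {f : ι → MvPolynomial σ K} (hf : ∀ i, f i ∈ homogeneousSubmodule σ K d) :
    ∃ φ, (∀ i, φ i ∈ homogeneousSubmodule σ K d) ∧ homologicalOperator Au As φ = f := by
  let S := Submodule.pi Set.univ fun _ : ι => homogeneousSubmodule σ K d
  have hS : ∀ φ ∈ S, homologicalOperator Au As φ ∈ S := fun φ hφ i _ =>
    homologicalOperator_mem_homogeneousSubmodule Au As (fun j => hφ j trivial) i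
  have : Module.Finite K S :=
    .of_fg (Submodule.fg_pi fun _ => homogeneousSubmodule_fg σ K d)
  have hinjS : Function.Injective ((homologicalOperator Au As).restrict hS) :=
    fun a b hab => Subtype.ext (hinj (congrArg Subtype.val hab))
  have hsurj := LinearMap.injective_iff_surjective.mp hinjS
  obtain ⟨⟨φ, hφ⟩, hφf⟩ := hsurj ⟨f, fun i _ => hf i⟩
  exact ⟨φ, fun i => hφ i trivial, congrArg Subtype.val hφf⟩

end MvPolynomial

theorem stable_manifold_homogeneous_solvable_general
    (n m d : ℕ)
    (As : Matrix (Fin n) (Fin n) ℝ) (Au : Matrix (Fin m) (Fin m) ℝ)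
    (hs : ∀ μ ∈ spectrum ℂ (As.map (Complex.ofReal)), ‖μ‖ < 1)
    (hu : ∀ ξ ∈ spectrum ℂ (Au.map (Complex.ofReal)), 1 < ‖ξ‖) :
    ∀ f : Fin m → MvPolynomial (Fin n) ℝ,
      (∀ i, f i ∈ MvPolynomial.homogeneousSubmodule (Fin n) ℝ d) →
      ∃! φ : Fin m → MvPolynomial (Fin n) ℝ,
        (∀ i, φ i ∈ MvPolynomial.homogeneousSubmodule (Fin n) ℝ d) ∧
        (∀ i, (∑ j, MvPolynomial.C (Au i j) * φ j)
            - MvPolynomial.aeval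
                (fun k => ∑ l, MvPolynomial.C (As k l) * MvPolynomial.X l) (φ i)
          = f i) := by
  intro f hf
  have hinj := homologicalOperator_injective hs hu
  obtain ⟨φ, hφ, hφf⟩ := exists_homologicalOperator_eq Au As hinj hf
  refine ⟨φ, ⟨hφ, fun i => ?_⟩, fun ψ hψ => hinj ?_⟩
  · rw [← homologicalOperator_apply, hφf]
  · ext1 i
    rw [hφf, ← hψ.2 i, homologicalOperator_apply]

/-- If every eigenvalue of `A_s` has modulus `< 1` and every eigenvalue of `A_u` has
modulus `> 1`, then for `d ≥ 2` the operator `φ ↦ A_u·φ(z) - φ(A_s z)` on vector-valued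
homogeneous polynomial maps of degree `d` is invertible. -/
theorem stable_manifold_homogeneous_solvable
    (n m d : ℕ) (hd : 2 ≤ d)
    (As : Matrix (Fin n) (Fin n) ℝ) (Au : Matrix (Fin m) (Fin m) ℝ)
    (hs : ∀ μ ∈ spectrum ℂ (As.map (Complex.ofReal)), ‖μ‖ < 1)
    (hu : ∀ ξ ∈ spectrum ℂ (Au.map (Complex.ofReal)), 1 < ‖ξ‖) :
    ∀ f : Fin m → MvPolynomial (Fin n) ℝ,
      (∀ i, f i ∈ MvPolynomial.homogeneousSubmodule (Fin n) ℝ d) →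
      ∃! φ : Fin m → MvPolynomial (Fin n) ℝ,
        (∀ i, φ i ∈ MvPolynomial.homogeneousSubmodule (Fin n) ℝ d) ∧
        (∀ i, (∑ j, MvPolynomial.C (Au i j) * φ j)
            - MvPolynomial.aeval
                (fun k => ∑ l, MvPolynomial.C (As k l) * MvPolynomial.X l) (φ i)
          = f i) :=
  stable_manifold_homogeneous_solvable_general n m d As Au hs hu
end

section
/- Let A, B, Q, S, R be real matrices with R invertible, and suppose A' - SR⁻¹B' is invertible. Define the forward Hamiltonian matrix ℍᶠ as the 2n×2n block matrix with blocks ℍᶠ₁₁ = (A - BR⁻¹S') - BR⁻¹B'(A' - SR⁻¹B')⁻¹(Q - SR⁻¹S'), ℍᶠ₁₂ = BR⁻¹B'(A' - SR⁻¹B')⁻¹, ℍᶠ₂₁ = -(A' - SR⁻¹B')⁻¹(Q - SR⁻¹S'), ℍᶠ₂₂ = (A' - SR⁻¹B')⁻¹. Then ℍᶠ satisfies (ℍᶠ)' J ℍᶠ = J, where J = [[0, I],[-I, 0]]; in particular ℍᶠ is invertible. -/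
/-!
With `E = Aᵀ - S R⁻¹ Bᵀ`, `G = B R⁻¹ Bᵀ` and `W = Q - S R⁻¹ Sᵀ`, the upper-left block of `ℍᶠ` is
`Eᵀ - G E⁻¹ W`, and `ℍᶠ` factors as `[[I, G], [0, I]] · [[Eᵀ, 0], [0, E⁻¹]] · [[I, 0], [-W, I]]`.
Shears by symmetric blocks and `diag(Eᵀ, E⁻¹)` are symplectic, and symplectic matrices form a
group. The `J` of the statement is the negative of Mathlib's `Matrix.J`, which defines the same
symplectic group.
-/

open Matrix

namespace Matrix

variable {l n α : Type*} [Fintype l] [CommSemiring α]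

theorem IsSymm.mul_mul_transpose {M : Matrix l l α} (hM : M.IsSymm) (B : Matrix n l α) :
    (B * M * Bᵀ).IsSymm := by
  rw [IsSymm, transpose_mul, transpose_mul, transpose_transpose, hM.eq, Matrix.mul_assoc]

end Matrix

namespace SymplecticGroup

variable {l R : Type*} [DecidableEq l] [Fintype l] [CommRing R]

theorem fromBlocks_one_mem_of_isSymm₁₂ {G : Matrix l l R} (hG : G.IsSymm) :
    fromBlocks 1 G 0 1 ∈ symplecticGroup l R :=
  fromBlocks_mem_iff.2 ⟨by simp, by simp [hG.eq], by simp⟩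

theorem fromBlocks_one_mem_of_isSymm₂₁ {W : Matrix l l R} (hW : W.IsSymm) :
    fromBlocks 1 0 W 1 ∈ symplecticGroup l R :=
  fromBlocks_mem_iff.2 ⟨by simp [hW.eq], by simp, by simp⟩

theorem fromBlocks_transpose_inv_mem {E : Matrix l l R} (hE : IsUnit E) :
    fromBlocks Eᵀ 0 0 E⁻¹ ∈ symplecticGroup l R :=
  fromBlocks_mem_iff.2
    ⟨by simp, by simp, by simp [mul_nonsing_inv _ ((isUnit_iff_isUnit_det E).1 hE)]⟩

theorem fromBlocks_eq_shear_mul_diag_mul_shear (E G W : Matrix l l R) :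
    fromBlocks (Eᵀ - G * E⁻¹ * W) (G * E⁻¹) (-(E⁻¹ * W)) E⁻¹ =
      fromBlocks 1 G 0 1 * fromBlocks Eᵀ 0 0 E⁻¹ * fromBlocks 1 0 (-W) 1 := by
  simp only [fromBlocks_multiply]
  congr 1 <;> noncomm_ring

theorem fromBlocks_transpose_sub_mem {E G W : Matrix l l R} (hE : IsUnit E) (hG : G.IsSymm)
    (hW : W.IsSymm) :
    fromBlocks (Eᵀ - G * E⁻¹ * W) (G * E⁻¹) (-(E⁻¹ * W)) E⁻¹ ∈ symplecticGroup l R := by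
  rw [fromBlocks_eq_shear_mul_diag_mul_shear]
  exact mul_mem (mul_mem (fromBlocks_one_mem_of_isSymm₁₂ hG)
    (fromBlocks_transpose_inv_mem hE)) (fromBlocks_one_mem_of_isSymm₂₁ hW.neg)

theorem transpose_mul_neg_J_mul {A : Matrix (l ⊕ l) (l ⊕ l) R} (hA : A ∈ symplecticGroup l R) :
    Aᵀ * (-J l R) * A = -J l R := by
  rw [Matrix.mul_neg, Matrix.neg_mul, mem_iff'.1 hA]

end SymplecticGroup

theorem forward_hamiltonian_symplectic_general
    (n m : ℕ)
    (A Q : Matrix (Fin n) (Fin n) ℝ) (B S : Matrix (Fin n) (Fin m) ℝ)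
    (R : Matrix (Fin m) (Fin m) ℝ)
    (hRsym : Rᵀ = R) (hQsym : Qᵀ = Q)
    (hinv : IsUnit (Aᵀ - S * R⁻¹ * Bᵀ))
    (HF : Matrix (Fin n ⊕ Fin n) (Fin n ⊕ Fin n) ℝ)
    (hHF : HF = Matrix.fromBlocks
      ((A - B * R⁻¹ * Sᵀ) - B * R⁻¹ * Bᵀ * (Aᵀ - S * R⁻¹ * Bᵀ)⁻¹ * (Q - S * R⁻¹ * Sᵀ))
      (B * R⁻¹ * Bᵀ * (Aᵀ - S * R⁻¹ * Bᵀ)⁻¹)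
      (-((Aᵀ - S * R⁻¹ * Bᵀ)⁻¹ * (Q - S * R⁻¹ * Sᵀ)))
      ((Aᵀ - S * R⁻¹ * Bᵀ)⁻¹))
    (J : Matrix (Fin n ⊕ Fin n) (Fin n ⊕ Fin n) ℝ)
    (hJ : J = Matrix.fromBlocks 0 1 (-1) 0) :
    HFᵀ * J * HF = J ∧ IsUnit HF := by
  have hRinv : R⁻¹.IsSymm := IsSymm.inv hRsym
  have hAE : A - B * R⁻¹ * Sᵀ = (Aᵀ - S * R⁻¹ * Bᵀ)ᵀ := by
    simp only [transpose_sub, transpose_mul, transpose_transpose, hRinv.eq, Matrix.mul_assoc]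
  have hHF_mem : HF ∈ symplecticGroup (Fin n) ℝ := by
    rw [hHF, hAE]
    exact SymplecticGroup.fromBlocks_transpose_sub_mem hinv (hRinv.mul_mul_transpose B)
      (IsSymm.sub hQsym (hRinv.mul_mul_transpose S))
  have hJ' : J = -Matrix.J (Fin n) ℝ := by
    rw [hJ, Matrix.J, fromBlocks_neg, neg_zero, neg_neg]
  exact ⟨hJ' ▸ SymplecticGroup.transpose_mul_neg_J_mul hHF_mem,
    (isUnit_iff_isUnit_det HF).2 (SymplecticGroup.symplectic_det hHF_mem)⟩

/-- The forward Hamiltonian matrix `ℍᶠ` is symplectic: `(ℍᶠ)ᵀ J ℍᶠ = J`, and in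
particular `ℍᶠ` is invertible. -/
theorem forward_hamiltonian_symplectic
    (n m : ℕ)
    (A Q : Matrix (Fin n) (Fin n) ℝ) (B S : Matrix (Fin n) (Fin m) ℝ)
    (R : Matrix (Fin m) (Fin m) ℝ)
    (hR : IsUnit R) (hRsym : Rᵀ = R) (hQsym : Qᵀ = Q)
    (hinv : IsUnit (Aᵀ - S * R⁻¹ * Bᵀ))
    (HF : Matrix (Fin n ⊕ Fin n) (Fin n ⊕ Fin n) ℝ)
    (hHF : HF = Matrix.fromBlocks
      ((A - B * R⁻¹ * Sᵀ) - B * R⁻¹ * Bᵀ * (Aᵀ - S * R⁻¹ * Bᵀ)⁻¹ * (Q - S * R⁻¹ * Sᵀ))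
      (B * R⁻¹ * Bᵀ * (Aᵀ - S * R⁻¹ * Bᵀ)⁻¹)
      (-((Aᵀ - S * R⁻¹ * Bᵀ)⁻¹ * (Q - S * R⁻¹ * Sᵀ)))
      ((Aᵀ - S * R⁻¹ * Bᵀ)⁻¹))
    (J : Matrix (Fin n ⊕ Fin n) (Fin n ⊕ Fin n) ℝ)
    (hJ : J = Matrix.fromBlocks 0 1 (-1) 0) :
    HFᵀ * J * HF = J ∧ IsUnit HF :=
  forward_hamiltonian_symplectic_general n m A Q B S R hRsym hQsym hinv HF hHF J hJ
end

section
/- Let φ = (φ₁,…,φₙ): U → ℝⁿ be a C¹ map on a star-shaped open neighborhood U of 0 in ℝⁿ with φ(0) = 0, satisfying the symmetry condition ∂φᵢ/∂z_j = ∂φ_j/∂z_i on U for all i, j. Then there exists a C² function ψ: U → ℝ with ψ(0) = 0 and φ = ∇ψ on U. -/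
/-!
The potential is the line integral `ψ z = ∫ φ` along the segment `[0, z]`. Near a point `b` of the
open set `U`, every segment `[b, c]` lying in a small ball around `b` is contained in `U`, hence by
star-shapedness so is the triangle with vertices `0, b, c`. On this convex triangle the
Poincaré lemma for convex sets (Stokes' theorem for the closed form `∑ φᵢ dzᵢ`) gives
`ψ c = ψ b + ∫_{[b, c]} φ`, and the derivative of the last integral in `c` at `c = b` is `φ b`.
-/

open Metric Matrix

section StarConvex

variable {𝕜 E F : Type*} [RCLike 𝕜] [NormedAddCommGroup E] [NormedSpace ℝ E] [NormedSpace 𝕜 E]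
  [NormedAddCommGroup F] [NormedSpace ℝ F] [NormedSpace 𝕜 F]

theorem StarConvex.convexHull_subset_of_segment_subset {a b c : E} {s : Set E}
    (hs : StarConvex ℝ a s) (hbc : segment ℝ b c ⊆ s) : convexHull ℝ {a, b, c} ⊆ s := by
  rw [← convexJoin_singleton_segment]
  rintro x hx
  obtain ⟨_, rfl, y, hy, hxy⟩ := mem_convexJoin.1 hx
  exact hs.segment_subset (hbc hy) hxy

theorem StarConvex.hasFDerivAt_curveIntegral_segment_of_hasFDerivAt_symmetric [CompleteSpace F]
    {a b : E} {s : Set E} {ω : E → E →L[𝕜] F} {dω : E → E →L[ℝ] E →L[𝕜] F}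
    (hs : StarConvex ℝ a s) (hso : IsOpen s)
    (hω : ∀ x ∈ s, HasFDerivAt ω (dω x) x) (hdω : ∀ x ∈ s, ∀ u v, dω x u v = dω x v u)
    (hb : b ∈ s) :
    HasFDerivAt (∫ᶜ x in .segment a ·, ω x) (ω b) b := by
  obtain ⟨r, hr, hrs⟩ := isOpen_iff.1 hso b hb
  have hsplit : ∀ c ∈ ball b r,
      (∫ᶜ x in .segment a b, ω x) + ∫ᶜ x in .segment b c, ω x = ∫ᶜ x in .segment a c, ω x := by
    intro c hc
    have hT : convexHull ℝ {a, b, c} ⊆ s := hs.convexHull_subset_of_segment_subset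
      (((convex_ball b r).segment_subset (mem_ball_self hr) hc).trans hrs)
    refine (convex_convexHull ℝ _).curveIntegral_segment_add_eq_of_hasFDerivWithinAt_symmetric
      (dω := dω) (fun x hx ↦ (hω x (hT hx)).hasFDerivWithinAt)
      (fun x hx u _ v _ ↦ hdω x (hT hx) u v) ?_ ?_ ?_ <;>
      exact subset_convexHull ℝ _ (by simp)
  have hsource : HasFDerivAt (∫ᶜ x in .segment b ·, ω x) (ω b) b :=
    HasFDerivAt.curveIntegral_segment_source' <| Filter.eventually_of_mem (hso.mem_nhds hb)
      fun x hx ↦ (hω x hx).continuousAt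
  refine (hsource.const_add (∫ᶜ x in .segment a b, ω x)).congr_of_eventuallyEq ?_
  filter_upwards [ball_mem_nhds b hr] with c hc using (hsplit c hc).symm

end StarConvex

section DotProduct

variable {ι : Type*} [Fintype ι]

noncomputable def dotProductCLM (𝕜 ι : Type*) [NontriviallyNormedField 𝕜] [CompleteSpace 𝕜]
    [Fintype ι] : (ι → 𝕜) →L[𝕜] (ι → 𝕜) →L[𝕜] 𝕜 :=
  LinearMap.toContinuousLinearMap
    (LinearMap.toContinuousLinearMap.toLinearMap ∘ₗ dotProductBilin 𝕜 𝕜)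

@[simp]
theorem dotProductCLM_apply {𝕜 : Type*} [NontriviallyNormedField 𝕜] [CompleteSpace 𝕜]
    (v w : ι → 𝕜) : dotProductCLM 𝕜 ι v w = v ⬝ᵥ w := rfl

theorem LinearMap.dotProduct_apply_comm_of_apply_single_symm {R : Type*} [CommRing R]
    [DecidableEq ι] (A : (ι → R) →ₗ[R] ι → R)
    (hA : ∀ i j, A (Pi.single j 1) i = A (Pi.single i 1) j) (v w : ι → R) :
    A v ⬝ᵥ w = A w ⬝ᵥ v := by
  have hM : (LinearMap.toMatrix' A)ᵀ = LinearMap.toMatrix' A := by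
    ext i j
    simp [LinearMap.toMatrix'_apply, hA]
  rw [← LinearMap.toMatrix'_mulVec, ← LinearMap.toMatrix'_mulVec, dotProduct_comm,
    dotProduct_mulVec, ← mulVec_transpose, hM]

end DotProduct

theorem poincare_lemma_star_shaped_general
    (n : ℕ) (U : Set (Fin n → ℝ)) (hU : IsOpen U)
    (hstar : StarConvex ℝ (0 : Fin n → ℝ) U)
    (φ : (Fin n → ℝ) → (Fin n → ℝ))
    (hφ : ContDiffOn ℝ 1 φ U)
    (hsym : ∀ z ∈ U, ∀ i j : Fin n,
      fderiv ℝ φ z (Pi.single j 1) i = fderiv ℝ φ z (Pi.single i 1) j) :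
    ∃ ψ : (Fin n → ℝ) → ℝ, ContDiffOn ℝ 2 ψ U ∧ ψ 0 = 0 ∧
      ∀ z ∈ U, ∀ i : Fin n, fderiv ℝ ψ z (Pi.single i 1) = φ z i := by
  set ω := fun z ↦ dotProductCLM ℝ (Fin n) (φ z)
  have hω : ∀ z ∈ U, HasFDerivAt ω ((dotProductCLM ℝ (Fin n)).comp (fderiv ℝ φ z)) z :=
    fun z hz ↦ (dotProductCLM ℝ (Fin n)).hasFDerivAt.comp z
      ((hφ.differentiableOn one_ne_zero).differentiableAt (hU.mem_nhds hz)).hasFDerivAt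
  have hdω : ∀ z ∈ U, ∀ u v, (dotProductCLM ℝ (Fin n)).comp (fderiv ℝ φ z) u v =
      (dotProductCLM ℝ (Fin n)).comp (fderiv ℝ φ z) v u := fun z hz ↦
    (fderiv ℝ φ z : (Fin n → ℝ) →ₗ[ℝ] Fin n → ℝ).dotProduct_apply_comm_of_apply_single_symm
      (hsym z hz)
  have hψ : ∀ z ∈ U, HasFDerivAt (∫ᶜ x in .segment 0 ·, ω x) (ω z) z := fun z hz ↦
    hstar.hasFDerivAt_curveIntegral_segment_of_hasFDerivAt_symmetric hU hω hdω hz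
  refine ⟨(∫ᶜ x in .segment 0 ·, ω x), ?_, by simp, fun z hz i ↦ by simp [(hψ z hz).fderiv, ω]⟩
  rw [← one_add_one_eq_two, contDiffOn_succ_iff_hasFDerivWithinAt_of_uniqueDiffOn hU.uniqueDiffOn]
  exact ⟨nofun, ω, (dotProductCLM ℝ (Fin n)).contDiff.comp_contDiffOn hφ,
    fun z hz ↦ (hψ z hz).hasFDerivWithinAt⟩

/-- Poincaré lemma on a star-shaped domain: a `C¹` vector field with symmetric Jacobian
on a star-shaped open neighborhood of `0` is the gradient of a `C²` potential. -/
theorem poincare_lemma_star_shaped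
    (n : ℕ) (U : Set (Fin n → ℝ)) (hU : IsOpen U) (h0 : (0 : Fin n → ℝ) ∈ U)
    (hstar : StarConvex ℝ (0 : Fin n → ℝ) U)
    (φ : (Fin n → ℝ) → (Fin n → ℝ))
    (hφ : ContDiffOn ℝ 1 φ U) (hφ0 : φ 0 = 0)
    (hsym : ∀ z ∈ U, ∀ i j : Fin n,
      fderiv ℝ φ z (Pi.single j 1) i = fderiv ℝ φ z (Pi.single i 1) j) :
    ∃ ψ : (Fin n → ℝ) → ℝ, ContDiffOn ℝ 2 ψ U ∧ ψ 0 = 0 ∧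
      ∀ z ∈ U, ∀ i : Fin n, fderiv ℝ ψ z (Pi.single i 1) = φ z i :=
  poincare_lemma_star_shaped_general n U hU hstar φ hφ hsym
end
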